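/- Let H = h₀σ₀ + h₁σ₁ + h₂σ₂ + h₃σ₃ be a 2×2 complex matrix and let T be an antilinear operator on ℂ² of the form T = Σᵢ₌₀³ cᵢτᵢ with cᵢ ∈ ℝ, not all zero, satisfying T² = I. If HT = TH (as maps on ℂ²), then Im(h₀) = 0 and Re(h₁)Im(h₁) + Re(h₂)Im(h₂) + Re(h₃)Im(h₃) = 0. -/
import Mathlib


open Matrix Complex

noncomputable def pauli : Fin 3 → Matrix (Fin 2) (Fin 2) ℂ :=
  ![!![0, 1; 1, 0], !![0, -I; I, 0], !![1, 0; 0, -1]]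

/-- The antilinear map `τ₀(x₁, x₂) = (-x̄₂, x̄₁)`. -/
noncomputable def tau0 (x : Fin 2 → ℂ) : Fin 2 → ℂ :=
  ![-(starRingEnd ℂ (x 1)), starRingEnd ℂ (x 0)]

/-- `τᵢ` for `i = 0, 1, 2, 3`: `τ₀` and `τᵢ = τ₀ ∘ σᵢ`. -/
noncomputable def tau : Fin 4 → (Fin 2 → ℂ) → (Fin 2 → ℂ)
  | 0 => tau0
  | 1 => fun x => tau0 ((pauli 0).mulVec x)
  | 2 => fun x => tau0 ((pauli 1).mulVec x)
  | 3 => fun x => tau0 ((pauli 2).mulVec x)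

noncomputable def sigma0 : Matrix (Fin 2) (Fin 2) ℂ := 1

set_option maxHeartbeats 1000000 in
theorem stmt17 (h₀ h₁ h₂ h₃ : ℂ) (H : Matrix (Fin 2) (Fin 2) ℂ)
    (hH : H = h₀ • sigma0 + h₁ • pauli 0 + h₂ • pauli 1 + h₃ • pauli 2)
    (c : Fin 4 → ℝ) (hc : c ≠ 0)
    (T : (Fin 2 → ℂ) → (Fin 2 → ℂ)) (hT : ∀ x, T x = ∑ i : Fin 4, (c i : ℂ) • tau i x)
    (hT2 : ∀ x, T (T x) = x)
    (hcomm : ∀ x, H.mulVec (T x) = T (H.mulVec x)) :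
    h₀.im = 0 ∧ h₁.re * h₁.im + h₂.re * h₂.im + h₃.re * h₃.im = 0 := by
  have A00 := congrFun (hT2 ![1,0]) 0
  have B00 := congrFun (hcomm ![1,0]) 0
  have B01 := congrFun (hcomm ![1,0]) 1
  have B10 := congrFun (hcomm ![0,1]) 0
  have B11 := congrFun (hcomm ![0,1]) 1
  simp [hT, hH, tau, tau0, pauli, sigma0, mulVec, dotProduct, Fin.sum_univ_four,
    Fin.sum_univ_two, Matrix.one_apply, Complex.ext_iff] at A00 B00 B01 B10 B11
  obtain ⟨eN, -⟩ := A00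
  obtain ⟨e1, e2⟩ := B00
  obtain ⟨e3, e4⟩ := B01
  obtain ⟨e5, e6⟩ := B10
  obtain ⟨e7, e8⟩ := B11
  have hi0 : h₀.im = 0 := by
    have hex : ∃ i, c i ≠ 0 := by
      by_contra h; push_neg at h; exact hc (funext h)
    obtain ⟨i, hci⟩ := hex
    fin_cases i
    · have : c 0 * h₀.im = 0 := by linear_combination (1/4 : ℝ) * e4 - (1/4 : ℝ) * e6
      exact (mul_eq_zero.mp this).resolve_left hci
    · have : c 1 * h₀.im = 0 := by linear_combination (-1/4 : ℝ) * e2 + (1/4 : ℝ) * e8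
      exact (mul_eq_zero.mp this).resolve_left hci
    · have : c 2 * h₀.im = 0 := by linear_combination (-1/4 : ℝ) * e1 - (1/4 : ℝ) * e7
      exact (mul_eq_zero.mp this).resolve_left hci
    · have : c 3 * h₀.im = 0 := by linear_combination (1/4 : ℝ) * e4 + (1/4 : ℝ) * e6
      exact (mul_eq_zero.mp this).resolve_left hci
  refine ⟨hi0, ?_⟩
  linear_combination
    (-(1/2 : ℝ) * c 0 * h₁.im + (1/2 : ℝ) * c 1 * h₃.im - (1/4 : ℝ) * c 2 * h₃.re
      + (1/2 : ℝ) * c 3 * h₂.re) * e1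
    + ((1/2 : ℝ) * c 0 * h₂.im - (1/4 : ℝ) * c 1 * h₃.re - (1/2 : ℝ) * c 2 * h₃.im
      + (1/2 : ℝ) * c 3 * h₁.re) * e2
    + ((1/2 : ℝ) * c 0 * h₀.im + (1/2 : ℝ) * c 0 * h₃.im - (1/4 : ℝ) * c 1 * h₁.im
      + (1/4 : ℝ) * c 1 * h₂.re - (1/4 : ℝ) * c 2 * h₁.re - (1/4 : ℝ) * c 2 * h₂.im
      - (1/2 : ℝ) * c 3 * h₃.im) * e3
    + ((1/2 : ℝ) * c 0 * h₃.re + (1/2 : ℝ) * c 1 * h₁.re + (1/2 : ℝ) * c 2 * h₂.re) * e4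
    + ((1/4 : ℝ) * c 1 * h₁.im + (1/4 : ℝ) * c 1 * h₂.re - (1/4 : ℝ) * c 2 * h₁.re
      + (1/4 : ℝ) * c 2 * h₂.im) * e5
    + ((1/4 : ℝ) * c 2 * h₃.re) * e7
    + (-(1/4 : ℝ) * c 1 * h₃.re) * e8
    - (h₁.re * h₁.im + h₂.re * h₂.im + h₃.re * h₃.im) * eN
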